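/- Over 𝔽_q with q = 2^m, m ≥ 2, every polynomial automorphism F of 𝔽_qⁿ that is linearizable (i.e., F = φ⁻¹ ∘ L ∘ φ for some polynomial automorphism φ and linear L ∈ GL_n(𝔽_q)) induces an even permutation of 𝔽_qⁿ. -/

import Mathlib

/-!
Conjugating `F` by the polynomial bijection `φ` turns it into the linear map `v ↦ A v`, and the sign
of a permutation is a conjugation invariant, so it suffices to show that every `A ∈ GLₙ(K)` acts by
an even permutation. `GLₙ(K)` is generated by transvections and invertible diagonal matrices, and
`Perm.sign` is a homomorphism to the abelian group `ℤˣ`. A transvection is a commutator as soon as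
`K ≠ 𝔽₂`, and in characteristic `2` every diagonal matrix is the square of one, so both kinds of
generators have sign `1`.
-/

open MvPolynomial Matrix

namespace MvPolynomial

variable {R σ τ ι κ : Type*} [CommSemiring R]

noncomputable def polyMap (p : ι → MvPolynomial σ R) (v : σ → R) : ι → R :=
  fun i => eval v (p i)

theorem polyMap_X : polyMap (X : σ → MvPolynomial σ R) = id := by
  funext v i
  exact eval_X i

theorem polyMap_aeval (g : σ → MvPolynomial τ R) (p : ι → MvPolynomial σ R) :
    polyMap (fun i => aeval g (p i)) = polyMap p ∘ polyMap g := by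
  funext v i
  change eval v (aeval g (p i)) = eval (polyMap g v) (p i)
  rw [aeval_eq_bind₁]
  exact eval₂Hom_bind₁ _ _ _ _

theorem polyMap_linear [Fintype κ] (M : Matrix ι κ R) (q : κ → MvPolynomial σ R) (v : σ → R) :
    polyMap (fun i => ∑ k, C (M i k) * q k) v = M *ᵥ polyMap q v := by
  funext i
  simp [polyMap, mulVec, dotProduct]

noncomputable def polyMapEquiv (φ : ι → MvPolynomial σ R) (φ' : σ → MvPolynomial ι R)
    (h : ∀ i, aeval φ' (φ i) = X i) (h' : ∀ j, aeval φ (φ' j) = X j) : (σ → R) ≃ (ι → R) where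
  toFun := polyMap φ
  invFun := polyMap φ'
  left_inv := congrFun (show polyMap φ' ∘ polyMap φ = id by
    rw [← polyMap_aeval]; simp only [h', polyMap_X])
  right_inv := congrFun (show polyMap φ ∘ polyMap φ' = id by
    rw [← polyMap_aeval]; simp only [h, polyMap_X])

end MvPolynomial

namespace Matrix

variable {ι K : Type*} [Fintype ι] [DecidableEq ι] [Field K]

theorem diagonal_update_one_mul_transvection {i j : ι} (hij : i ≠ j) (d c : K) :
    diagonal (Function.update 1 i d) * transvection i j c =
      transvection i j (d * c) * diagonal (Function.update 1 i d) := by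
  ext k l
  simp only [diagonal_mul, mul_diagonal, transvection, add_apply, single_apply, one_apply,
    Function.update_apply, Pi.one_apply]
  split_ifs <;> grind

namespace GeneralLinearGroup

/-- With `d ≠ 0, 1` and `D = diag(1, …, d, …, 1)`, the transvection `T(c)` is the commutator
`D T(a) D⁻¹ T(a)⁻¹` for `a = c / (d - 1)`. -/
theorem map_transvection_eq_one {G : Type*} [CommGroup G] [Nontrivial Kˣ] (χ : GL ι K →* G)
    (t : TransvectionStruct ι K) (h : t.toMatrix.det ≠ 0) : χ (mkOfDetNeZero t.toMatrix h) = 1 := by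
  let T (a : K) : GL ι K := mkOfDetNeZero (transvection t.i t.j a) (by simp [t.hij])
  have hT_add (a b : K) : T a * T b = T (a + b) :=
    Units.ext (transvection_mul_transvection_same _ _ t.hij a b)
  obtain ⟨d, hd⟩ := exists_ne (1 : Kˣ)
  let D : GL ι K := mkOfDetNeZero (diagonal (Function.update 1 t.i (d : K))) (by
    simp [det_diagonal, Function.update_apply, Finset.prod_ite_eq'])
  have hconj (a : K) : χ (T (d * a)) = χ (T a) := by
    have hDT : D * T a = T (d * a) * D :=
      Units.ext (diagonal_update_one_mul_transvection t.hij (d : K) a)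
    have := congrArg χ hDT
    rw [map_mul, map_mul, mul_comm] at this
    exact (mul_right_cancel this).symm
  have hd1 : (d : K) - 1 ≠ 0 := sub_ne_zero.mpr (Units.val_eq_one.not.mpr hd)
  have key := hconj (t.c / (d - 1))
  rw [show (d : K) * (t.c / (d - 1)) = t.c + t.c / (d - 1) by field_simp; ring, ← hT_add,
    map_mul] at key
  exact mul_eq_right.mp key

theorem map_diagonal_eq_one (χ : GL ι K →* ℤˣ) (hsq : ∀ a : K, IsSquare a) (D : ι → K)
    (h : (diagonal D).det ≠ 0) : χ (mkOfDetNeZero (diagonal D) h) = 1 := by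
  choose E hE using fun k => hsq (D k)
  have hDE : diagonal D = diagonal E * diagonal E := by simp [diagonal_mul_diagonal, hE]
  have hE0 : (diagonal E).det ≠ 0 := left_ne_zero_of_mul (by rwa [← det_mul, ← hDE])
  have : mkOfDetNeZero (diagonal D) h =
      mkOfDetNeZero (diagonal E) hE0 * mkOfDetNeZero (diagonal E) hE0 := Units.ext hDE
  rw [this, map_mul, Int.units_mul_self]

theorem map_eq_one_of_forall_isSquare [Nontrivial Kˣ] (χ : GL ι K →* ℤˣ)
    (hsq : ∀ a : K, IsSquare a) (A : GL ι K) : χ A = 1 := by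
  have hA : mkOfDetNeZero (A : Matrix ι ι K) (det_ne_zero A) = A := Units.ext rfl
  rw [← hA]
  refine diagonal_transvection_induction_of_det_ne_zero
    (fun M => ∀ h, χ (mkOfDetNeZero M h) = 1) _ (det_ne_zero A)
    (fun D h => map_diagonal_eq_one χ hsq D) (map_transvection_eq_one χ) ?_ _
  intro M N hM hN hχM hχN h
  rw [show mkOfDetNeZero (M * N) h = mkOfDetNeZero M hM * mkOfDetNeZero N hN from Units.ext rfl,
    map_mul, hχM, hχN, mul_one]

theorem sign_toPermHom_eq_one [Fintype K] [DecidableEq K] (hK : ringChar K = 2)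
    (hcard : 2 < Fintype.card K) (A : GL ι K) :
    Equiv.Perm.sign (MulAction.toPermHom (GL ι K) (ι → K) A) = 1 := by
  have : Nontrivial Kˣ := Fintype.one_lt_card_iff_nontrivial.mp (by
    rw [Fintype.card_units]; omega)
  exact map_eq_one_of_forall_isSquare (Equiv.Perm.sign.comp (MulAction.toPermHom _ _))
    (FiniteField.isSquare_of_char_two hK) A

end GeneralLinearGroup
end Matrix

/-- Over 𝔽_q, q = 2^m, m ≥ 2, every linearizable polynomial automorphism F = φ⁻¹ ∘ L ∘ φ
(L linear) induces an even permutation of 𝔽_qⁿ. -/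
theorem stmt_18 (K : Type) [Field K] [Fintype K] [DecidableEq K] (m : ℕ) (hm : 2 ≤ m)
    (hq : Fintype.card K = 2 ^ m) (n : ℕ)
    (F φ φ' : Fin n → MvPolynomial (Fin n) K)
    (hφ : ∀ i, aeval φ' (φ i) = X i) (hφ' : ∀ i, aeval φ (φ' i) = X i)
    (A : GL (Fin n) K)
    (hlin : ∀ i, F i =
      aeval (fun j => ∑ k, C ((A : Matrix (Fin n) (Fin n) K) j k) * φ k) (φ' i))
    (σ : Equiv.Perm (Fin n → K)) (hσ : ∀ v, σ v = fun i => eval v (F i)) :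
    Equiv.Perm.sign σ = 1 := by
  have hcard : 4 ≤ Fintype.card K := hq ▸ Nat.pow_le_pow_right two_pos hm
  have hK : ringChar K = 2 := FiniteField.even_card_iff_char_two.mpr (by
    rw [hq, Nat.two_pow_mod_two_eq_zero]; omega)
  let ψ := polyMapEquiv φ' φ hφ' hφ
  have hσ_conj :
      σ = (ψ.symm.trans (MulAction.toPermHom (GL (Fin n) K) (Fin n → K) A)).trans ψ := by
    ext1 v
    rw [hσ, show (fun i => eval v (F i)) = polyMap F v from rfl, funext hlin, polyMap_aeval]
    simp only [Function.comp_apply, polyMap_linear]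
    rfl
  rw [hσ_conj, Equiv.Perm.sign_symm_trans_trans]
  exact GeneralLinearGroup.sign_toPermHom_eq_one hK (by omega) A
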